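/- arXiv:2403.01906 — 2 statements merged into one kernel-verified Lean document; each statement's English description precedes it below -/
import Mathlib

section
/- For every angle φ ∈ ℝ, let R_φ : ℝ³ → ℝ³ be the map fixing the first component and rotating the last two components by angle φ, i.e. R_φ(v₀,v₁,v₂) = (v₀, v₁ cos φ − v₂ sin φ, v₁ sin φ + v₂ cos φ). Then for every v ∈ ℝ³, Ψ(R_φ v) = R_φ Ψ(v). -/
/-!
Rotating `v` by `φ` shifts the angular profile: `V(r, θ, R_φ v) = V(r, θ - φ/2, v)`. All integrands
of `Ψ` are `π`-periodic in `θ`, so after Fubini the shift by `φ/2` does not change their integrals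
over a period, while the weights `cos 2θ`, `sin 2θ` become `cos (2θ + φ)`, `sin (2θ + φ)`, which
the addition formulas turn into the rotation `R_φ`. Compact support of `P` makes every integrand
integrable on the strip.
-/

open MeasureTheory Real Set Filter

/-- The neuronal activity profile `V(r,θ,v) = v₀ + r v₁ cos(2θ) + r v₂ sin(2θ)`. -/
noncomputable def Vact (v : ℝ × ℝ × ℝ) (r θ : ℝ) : ℝ :=
  v.1 + r * v.2.1 * Real.cos (2 * θ) + r * v.2.2 * Real.sin (2 * θ)

/-- The nonlinear part `Ψ` of the reduced dynamics. -/
noncomputable def Psi (σ P : ℝ → ℝ) (J0 J1 : ℝ) (v : ℝ × ℝ × ℝ) : ℝ × ℝ × ℝ :=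
  (J0 * ∫ x in (Set.Ici (0:ℝ)) ×ˢ (Set.Ico (-(π/2)) (π/2)),
      σ (Vact v x.1 x.2) * P x.1 / π,
   J1 * ∫ x in (Set.Ici (0:ℝ)) ×ˢ (Set.Ico (-(π/2)) (π/2)),
      x.1 * Real.cos (2 * x.2) * σ (Vact v x.1 x.2) * P x.1 / π,
   J1 * ∫ x in (Set.Ici (0:ℝ)) ×ˢ (Set.Ico (-(π/2)) (π/2)),
      x.1 * Real.sin (2 * x.2) * σ (Vact v x.1 x.2) * P x.1 / π)

/-- Rotation by angle `φ` acting on the last two components of `ℝ³`. -/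
noncomputable def Rot (φ : ℝ) (v : ℝ × ℝ × ℝ) : ℝ × ℝ × ℝ :=
  (v.1, v.2.1 * Real.cos φ - v.2.2 * Real.sin φ, v.2.1 * Real.sin φ + v.2.2 * Real.cos φ)

theorem setIntegral_prod_Ico_comp_add_right_of_periodic {E : Type*} [NormedAddCommGroup E]
    [NormedSpace ℝ E] {F : ℝ × ℝ → E} {T : ℝ} (hT : 0 ≤ T) (hF : ∀ r θ, F (r, θ + T) = F (r, θ))
    (A : Set ℝ) (a c : ℝ) (hFi : IntegrableOn F (A ×ˢ Ico a (a + T)))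
    (hFci : IntegrableOn (fun x => F (x.1, x.2 + c)) (A ×ˢ Ico a (a + T))) :
    ∫ x in A ×ˢ Ico a (a + T), F (x.1, x.2 + c) = ∫ x in A ×ˢ Ico a (a + T), F x := by
  rw [Measure.volume_eq_prod] at hFi hFci ⊢
  rw [setIntegral_prod _ hFci, setIntegral_prod _ hFi]
  refine integral_congr_ae (Eventually.of_forall fun r => ?_)
  have hper : Function.Periodic (fun θ => F (r, θ)) T := fun θ => hF r θ
  simp only [integral_Ico_eq_integral_Ioc,
    ← intervalIntegral.integral_of_le (le_add_of_nonneg_right hT)]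
  rw [intervalIntegral.integral_comp_add_right (fun θ => F (r, θ)), add_right_comm,
    hper.intervalIntegral_add_eq (a + c) a]

theorem integrableOn_mul_comp_fst_of_hasCompactSupport {g : ℝ × ℝ → ℝ} (hg : Continuous g)
    {P : ℝ → ℝ} (hP : HasCompactSupport P) {A B : Set ℝ} (hPi : IntegrableOn P A)
    (hB : Bornology.IsBounded B) :
    IntegrableOn (fun x => g x * P x.1) (A ×ˢ B) := by
  obtain ⟨C, hC⟩ := (hP.isCompact.prod hB.isCompact_closure).exists_bound_of_continuousOn
    hg.continuousOn
  have : IsFiniteMeasure (volume.restrict B) := isFiniteMeasure_restrict.2 hB.measure_lt_top.ne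
  have hPfst : IntegrableOn (fun x : ℝ × ℝ => P x.1) (A ×ˢ B) := by
    rw [IntegrableOn, Measure.volume_eq_prod, ← Measure.prod_restrict]
    exact hPi.comp_fst _
  refine (hPfst.norm.const_mul C).mono' (hg.aestronglyMeasurable.mul hPfst.1) ?_
  refine ae_restrict_of_ae_restrict_of_subset (prod_mono (subset_univ A) subset_closure)
    (ae_restrict_of_forall_mem (MeasurableSet.univ.prod isClosed_closure.measurableSet) ?_)
  rintro x ⟨-, hx⟩
  rw [norm_mul]
  by_cases hPx : P x.1 = 0
  · simp [hPx]
  · exact mul_le_mul_of_nonneg_right (hC x ⟨subset_tsupport P hPx, hx⟩) (norm_nonneg _)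

theorem Vact_Rot (φ : ℝ) (v : ℝ × ℝ × ℝ) (r θ : ℝ) :
    Vact (Rot φ v) r θ = Vact v r (θ + -(φ / 2)) := by
  simp only [Vact, Rot]
  rw [show 2 * (θ + -(φ / 2)) = 2 * θ - φ by ring, cos_sub, sin_sub]
  ring

theorem Vact_add_pi (v : ℝ × ℝ × ℝ) (r θ : ℝ) : Vact v r (θ + π) = Vact v r θ := by
  simp only [Vact, mul_add, cos_add_two_pi, sin_add_two_pi]

theorem continuous_Vact (v : ℝ × ℝ × ℝ) : Continuous fun x : ℝ × ℝ => Vact v x.1 x.2 := by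
  unfold Vact
  fun_prop

section

variable {σ P : ℝ → ℝ} {A : Set ℝ}

theorem integrableOn_mul_sigma_Vact {g : ℝ × ℝ → ℝ} (hg : Continuous g) (hσ : Continuous σ)
    (hP : HasCompactSupport P) (hPi : IntegrableOn P A) (v : ℝ × ℝ × ℝ) (a b : ℝ) :
    IntegrableOn (fun x => g x * σ (Vact v x.1 x.2) * P x.1 / π) (A ×ˢ Ico a b) :=
  (integrableOn_mul_comp_fst_of_hasCompactSupport (hg.mul (hσ.comp (continuous_Vact v))) hP hPi
    (Metric.isBounded_Ico a b)).div_const π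

theorem setIntegral_mul_sigma_Vact_Rot {k : ℝ × ℝ → ℝ} (hk : Continuous k)
    (hkper : ∀ r θ, k (r, θ + π) = k (r, θ)) (hσ : Continuous σ) (hP : HasCompactSupport P)
    (hPi : IntegrableOn P A) (φ a : ℝ) (v : ℝ × ℝ × ℝ) :
    ∫ x in A ×ˢ Ico a (a + π), k x * σ (Vact (Rot φ v) x.1 x.2) * P x.1 / π =
      ∫ x in A ×ˢ Ico a (a + π), k (x.1, x.2 + φ / 2) * σ (Vact v x.1 x.2) * P x.1 / π := by
  set F : ℝ × ℝ → ℝ := fun x => k (x.1, x.2 + φ / 2) * σ (Vact v x.1 x.2) * P x.1 / π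
  have hkφ : Continuous fun x : ℝ × ℝ => k (x.1, x.2 + φ / 2) := by fun_prop
  have hF : ∀ r θ, F (r, θ + π) = F (r, θ) := by
    intro r θ
    simp only [F, Vact_add_pi, add_right_comm θ π, hkper]
  calc ∫ x in A ×ˢ Ico a (a + π), k x * σ (Vact (Rot φ v) x.1 x.2) * P x.1 / π
      = ∫ x in A ×ˢ Ico a (a + π), F (x.1, x.2 + -(φ / 2)) := by
        simp only [F, Vact_Rot, neg_add_cancel_right]
    _ = ∫ x in A ×ˢ Ico a (a + π), F x :=
        setIntegral_prod_Ico_comp_add_right_of_periodic pi_pos.le hF A a _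
          (integrableOn_mul_sigma_Vact hkφ hσ hP hPi v _ _)
          (by simpa only [F, Vact_Rot, neg_add_cancel_right]
            using integrableOn_mul_sigma_Vact hk hσ hP hPi (Rot φ v) a (a + π))

theorem setIntegral_sigma_Vact_Rot (hσ : Continuous σ) (hP : HasCompactSupport P)
    (hPi : IntegrableOn P A) (φ a : ℝ) (v : ℝ × ℝ × ℝ) :
    ∫ x in A ×ˢ Ico a (a + π), σ (Vact (Rot φ v) x.1 x.2) * P x.1 / π =
      ∫ x in A ×ˢ Ico a (a + π), σ (Vact v x.1 x.2) * P x.1 / π := by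
  simpa only [one_mul] using
    setIntegral_mul_sigma_Vact_Rot (k := fun _ => 1) continuous_const (fun _ _ => rfl)
      hσ hP hPi φ a v

theorem setIntegral_cos_mul_sigma_Vact_Rot (hσ : Continuous σ) (hP : HasCompactSupport P)
    (hPi : IntegrableOn P A) (φ a : ℝ) (v : ℝ × ℝ × ℝ) :
    ∫ x in A ×ˢ Ico a (a + π), x.1 * cos (2 * x.2) * σ (Vact (Rot φ v) x.1 x.2) * P x.1 / π =
      cos φ * (∫ x in A ×ˢ Ico a (a + π), x.1 * cos (2 * x.2) * σ (Vact v x.1 x.2) * P x.1 / π)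
        - sin φ * ∫ x in A ×ˢ Ico a (a + π),
          x.1 * sin (2 * x.2) * σ (Vact v x.1 x.2) * P x.1 / π := by
  rw [setIntegral_mul_sigma_Vact_Rot (by fun_prop)
    (fun r θ => by simp only [mul_add, cos_add_two_pi]) hσ hP hPi, ← integral_const_mul,
    ← integral_const_mul, ← integral_sub]
  · congr 1 with x
    simp only [mul_add, mul_div_cancel₀ φ two_ne_zero, cos_add]
    ring
  all_goals exact (integrableOn_mul_sigma_Vact (by fun_prop) hσ hP hPi v _ _).const_mul _

theorem setIntegral_sin_mul_sigma_Vact_Rot (hσ : Continuous σ) (hP : HasCompactSupport P)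
    (hPi : IntegrableOn P A) (φ a : ℝ) (v : ℝ × ℝ × ℝ) :
    ∫ x in A ×ˢ Ico a (a + π), x.1 * sin (2 * x.2) * σ (Vact (Rot φ v) x.1 x.2) * P x.1 / π =
      sin φ * (∫ x in A ×ˢ Ico a (a + π), x.1 * cos (2 * x.2) * σ (Vact v x.1 x.2) * P x.1 / π)
        + cos φ * ∫ x in A ×ˢ Ico a (a + π),
          x.1 * sin (2 * x.2) * σ (Vact v x.1 x.2) * P x.1 / π := by
  rw [setIntegral_mul_sigma_Vact_Rot (by fun_prop)
    (fun r θ => by simp only [mul_add, sin_add_two_pi]) hσ hP hPi, ← integral_const_mul,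
    ← integral_const_mul, ← integral_add]
  · congr 1 with x
    simp only [mul_add, mul_div_cancel₀ φ two_ne_zero, sin_add]
    ring
  all_goals exact (integrableOn_mul_sigma_Vact (by fun_prop) hσ hP hPi v _ _).const_mul _

end

theorem psi_equivariant_general
    (σ P : ℝ → ℝ) (J0 J1 : ℝ)
    (hσ : ContDiff ℝ (⊤ : ℕ∞) σ)
    (hPsupp : HasCompactSupport P)
    (hPint : ∫ r in Set.Ici (0:ℝ), P r = 1)
    (φ : ℝ) (v : ℝ × ℝ × ℝ) :
    Psi σ P J0 J1 (Rot φ v) = Rot φ (Psi σ P J0 J1 v) := by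
  have hPi : IntegrableOn P (Ici 0) := Integrable.of_integral_ne_zero (by simp [hPint])
  have hperiod : Ico (-(π / 2)) (π / 2) = Ico (-(π / 2)) (-(π / 2) + π) := by ring_nf
  have hσc := hσ.continuous
  rw [Psi, Psi, hperiod, setIntegral_sigma_Vact_Rot hσc hPsupp hPi,
    setIntegral_cos_mul_sigma_Vact_Rot hσc hPsupp hPi,
    setIntegral_sin_mul_sigma_Vact_Rot hσc hPsupp hPi]
  refine Prod.ext rfl (Prod.ext ?_ ?_) <;>
  · simp only [Rot]
    ring

/-- `Ψ(R_φ v) = R_φ Ψ(v)` for every angle `φ` and every `v ∈ ℝ³`. -/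
theorem psi_equivariant
    (σ P : ℝ → ℝ) (J0 J1 : ℝ) (hJ0 : J0 ≠ 0) (hJ1 : 0 < J1)
    (hσ : ContDiff ℝ (⊤ : ℕ∞) σ)
    (hodd : ∀ x, σ (-x) = -σ x)
    (hpos : ∀ x, 0 < deriv σ x)
    (hcc : ∀ x, x * iteratedDeriv 2 σ x ≤ 0)
    (hσ0 : σ 0 = 0)
    (hbot : Tendsto σ atBot (nhds (-1)))
    (htop : Tendsto σ atTop (nhds 1))
    (hmax : ∀ x, deriv σ x ≤ deriv σ 0)
    (hP0 : ∀ r, 0 ≤ P r)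
    (hPsupp : HasCompactSupport P)
    (hPint : ∫ r in Set.Ici (0:ℝ), P r = 1)
    (φ : ℝ) (v : ℝ × ℝ × ℝ) :
    Psi σ P J0 J1 (Rot φ v) = Rot φ (Psi σ P J0 J1 v) :=
  psi_equivariant_general σ P J0 J1 hσ hPsupp hPint φ v
end

section
/- For every l > 0, the 4×4 real matrix P_l with entries P_l(i,j) = (−1)^{i+j} · l^{−(i+j−1)} · (i+j−2)! / ((i−1)!(j−1)!), for 1 ≤ i, j ≤ 4, is symmetric positive definite and satisfies the identity P_l A + Aᵀ P_l − Cᵀ C = −l P_l, where A is the 4×4 nilpotent shift matrix (A(i,j) = 1 if j = i+1 and 0 otherwise) and C = (1, 0, 0, 0) ∈ ℝ^{1×4}. -/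
open Matrix

/-- The high-gain Lyapunov matrix `P_l`, with 1-based entries
`P_l(i,j) = (−1)^{i+j} l^{−(i+j−1)} (i+j−2)!/((i−1)!(j−1)!)` (here indexed from 0). -/
noncomputable def Pl (l : ℝ) : Matrix (Fin 4) (Fin 4) ℝ :=
  Matrix.of fun i j : Fin 4 =>
    (-1 : ℝ) ^ ((i : ℕ) + (j : ℕ)) * l ^ (-(((i : ℕ) + (j : ℕ) + 1 : ℕ) : ℤ)) *
      (Nat.factorial ((i : ℕ) + (j : ℕ))) /
        ((Nat.factorial (i : ℕ)) * (Nat.factorial (j : ℕ)))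

/-- The 4×4 nilpotent shift matrix. -/
def Ashift : Matrix (Fin 4) (Fin 4) ℝ :=
  Matrix.of fun i j : Fin 4 => if (j : ℕ) = (i : ℕ) + 1 then 1 else 0

/-- The output row matrix `C = (1,0,0,0)`. -/
def Crow : Matrix (Fin 1) (Fin 4) ℝ := !![1, 0, 0, 0]

/-! With `c = (-l)⁻¹`, the (0-indexed) entries are `P_l(i,j) = C(i+j, i) c^(i+j) / l`.
Right multiplication by the shift `A` moves columns by one and `Aᵀ P_l = (P_l A)ᵀ` moves rows,
so the Lyapunov identity is, entry by entry, Pascal's rule `C(m+1, k+1) = C(m, k) + C(m, k+1)`;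
only the corner entry `1 = l P_l(0,0)` is balanced by `CᵀC`.
For definiteness, `P_l = l⁻¹ D Π D` with `D = diag(cⁱ)` and the Pascal matrix `Π(i,j) = C(i+j, i)`,
and Vandermonde's identity factors `Π = L Lᵀ` with `L(i,k) = C(i,k)` unitriangular. -/

open Finset

theorem Nat.choose_add_eq_sum_choose_mul_choose (i j : ℕ) {N : ℕ} (h : i < N) :
    (i + j).choose i = ∑ k ∈ range N, i.choose k * j.choose k := by
  rw [Nat.add_choose_eq, ← Nat.sum_antidiagonal_swap]
  simp only [Prod.fst_swap, Prod.snd_swap]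
  rw [Nat.sum_antidiagonal_eq_sum_range_succ (fun a b => i.choose b * j.choose a)]
  refine (sum_congr rfl fun k hk => ?_).trans
    (sum_subset (range_subset_range.2 h) fun k _ hk => ?_)
  · rw [Nat.choose_symm (mem_range_succ_iff.1 hk)]
  · rw [Nat.choose_eq_zero_of_lt (by simpa using hk), zero_mul]

section Pascal

variable (R : Type*) [CommSemiring R] (n : ℕ)

def pascalMatrix : Matrix (Fin n) (Fin n) R := of fun i j => ((i + j : ℕ).choose i : R)

def binomialMatrix : Matrix (Fin n) (Fin n) R := of fun i j => ((i : ℕ).choose j : R)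

theorem pascalMatrix_eq_mul_transpose :
    pascalMatrix R n = binomialMatrix R n * (binomialMatrix R n)ᵀ := by
  ext i j
  simp only [pascalMatrix, binomialMatrix, of_apply, mul_apply, transpose_apply]
  rw [Nat.choose_add_eq_sum_choose_mul_choose _ _ i.isLt, ← Fin.sum_univ_eq_sum_range]
  push_cast
  rfl

theorem binomialMatrix_isLowerTriangular : (binomialMatrix R n).IsLowerTriangular := by
  intro i j hij
  simp [binomialMatrix, Nat.choose_eq_zero_of_lt (show (i : ℕ) < j from hij)]

end Pascal

theorem det_binomialMatrix (R : Type*) [CommRing R] (n : ℕ) : (binomialMatrix R n).det = 1 := by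
  rw [det_of_isLowerTriangular _ (binomialMatrix_isLowerTriangular R n)]
  simp [binomialMatrix]

theorem pascalMatrix_posDef (n : ℕ) : (pascalMatrix ℝ n).PosDef := by
  rw [pascalMatrix_eq_mul_transpose, ← conjTranspose_eq_transpose_of_trivial]
  refine PosDef.mul_conjTranspose_self _ (vecMul_injective_of_isUnit ?_)
  rw [isUnit_iff_isUnit_det, det_binomialMatrix]
  exact isUnit_one

section Shift

variable (R : Type*) [NonAssocSemiring R] (n : ℕ)

def upShift : Matrix (Fin n) (Fin n) R := of fun i j => if (j : ℕ) = i + 1 then 1 else 0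

variable {R n}

theorem mul_upShift_apply_zero (M : Matrix (Fin (n + 1)) (Fin (n + 1)) R) (i : Fin (n + 1)) :
    (M * upShift R (n + 1)) i 0 = 0 := by
  simp [mul_apply, upShift]

theorem mul_upShift_apply_succ (M : Matrix (Fin (n + 1)) (Fin (n + 1)) R) (i : Fin (n + 1))
    (j : Fin n) : (M * upShift R (n + 1)) i j.succ = M i j.castSucc := by
  rw [mul_apply, sum_eq_single j.castSucc] <;> simp +contextual [upShift, Fin.ext_iff, eq_comm]

end Shift

section HighGain

variable {K : Type*} [Field K]

noncomputable def highGainEntry (l : K) (i j : ℕ) : K := (i + j).choose i * (-l)⁻¹ ^ (i + j) / l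

noncomputable def highGainMatrix (n : ℕ) (l : K) : Matrix (Fin n) (Fin n) K :=
  of fun i j => highGainEntry l i j

theorem highGainEntry_comm (l : K) (i j : ℕ) : highGainEntry l i j = highGainEntry l j i := by
  rw [highGainEntry, highGainEntry, add_comm j, Nat.choose_symm_add]

theorem highGainMatrix_isSymm (n : ℕ) (l : K) : (highGainMatrix n l).IsSymm := by
  ext i j
  exact highGainEntry_comm l j i

theorem highGainMatrix_eq_smul_diagonal_mul_pascalMatrix_mul_diagonal (n : ℕ) (l : K) :
    highGainMatrix n l = l⁻¹ • (diagonal (fun i : Fin n => (-l)⁻¹ ^ (i : ℕ)) * pascalMatrix K n *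
      diagonal (fun i : Fin n => (-l)⁻¹ ^ (i : ℕ))) := by
  ext i j
  simp only [highGainMatrix, highGainEntry, pascalMatrix, of_apply, Matrix.smul_apply,
    mul_diagonal, diagonal_mul, smul_eq_mul, pow_add]
  ring

section Lyapunov

variable {l : K} (hl : l ≠ 0)
include hl

theorem mul_highGainEntry_zero_zero : l * highGainEntry l 0 0 = 1 := by
  simp [highGainEntry, hl]

theorem highGainEntry_zero_eq_neg_mul (j : ℕ) :
    highGainEntry l 0 j = -l * highGainEntry l 0 (j + 1) := by
  simp only [highGainEntry, zero_add, Nat.choose_zero_right, Nat.cast_one, one_mul, pow_succ]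
  field_simp

theorem highGainEntry_pascal (i j : ℕ) :
    highGainEntry l (i + 1) j + highGainEntry l i (j + 1) =
      -l * highGainEntry l (i + 1) (j + 1) := by
  simp only [highGainEntry]
  rw [show i + 1 + (j + 1) = i + j + 1 + 1 by ring, show i + 1 + j = i + j + 1 by ring,
    show i + (j + 1) = i + j + 1 by ring, Nat.choose_succ_succ' (i + j + 1) i,
    pow_succ _ (i + j + 1)]
  push_cast
  field_simp
  ring

theorem highGainMatrix_lyapunov (n : ℕ) :
    highGainMatrix (n + 1) l * upShift K (n + 1) + (upShift K (n + 1))ᵀ * highGainMatrix (n + 1) l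
      - single 0 0 1 = (-l) • highGainMatrix (n + 1) l := by
  have hrows : (upShift K (n + 1))ᵀ * highGainMatrix (n + 1) l =
      (highGainMatrix (n + 1) l * upShift K (n + 1))ᵀ := by
    rw [transpose_mul, (highGainMatrix_isSymm _ l).eq]
  rw [hrows]
  ext i j
  induction i using Fin.cases <;> induction j using Fin.cases <;>
    simp only [Matrix.sub_apply, Matrix.add_apply, Matrix.smul_apply, transpose_apply,
      mul_upShift_apply_zero, mul_upShift_apply_succ, highGainMatrix, of_apply, Fin.val_succ,
      Fin.val_castSucc, Fin.val_zero, single_apply, smul_eq_mul, (Fin.succ_ne_zero _).symm,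
      and_true, and_false, if_true, if_false, zero_add, add_zero, sub_zero]
  case zero.zero => rw [neg_mul, ← mul_highGainEntry_zero_zero hl]; ring
  case zero.succ j => exact highGainEntry_zero_eq_neg_mul hl j
  case succ.zero i => rw [highGainEntry_comm l (i + 1), highGainEntry_zero_eq_neg_mul hl]
  case succ.succ i j => rw [highGainEntry_comm l (j + 1), highGainEntry_pascal hl]

end Lyapunov

end HighGain

theorem highGainMatrix_posDef (n : ℕ) {l : ℝ} (hl : 0 < l) : (highGainMatrix n l).PosDef := by
  rw [highGainMatrix_eq_smul_diagonal_mul_pascalMatrix_mul_diagonal]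
  refine PosDef.smul ?_ (inv_pos.2 hl)
  set D := diagonal fun i : Fin n => (-l)⁻¹ ^ (i : ℕ)
  have hD : IsUnit D := isUnit_diagonal.2 <| Pi.isUnit_iff.2 fun i =>
    (pow_ne_zero _ (inv_ne_zero (neg_ne_zero.2 hl.ne'))).isUnit
  have hDsymm : Dᴴ = D := by simp [D]
  simpa only [hDsymm] using (pascalMatrix_posDef n).mul_mul_conjTranspose_same
    (vecMul_injective_of_isUnit hD)

theorem Pl_eq_highGainMatrix (l : ℝ) : Pl l = highGainMatrix 4 l := by
  ext i j
  simp only [Pl, highGainMatrix, highGainEntry, of_apply]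
  rw [Nat.cast_add_choose, _root_.zpow_neg, zpow_natCast, pow_succ, inv_neg, neg_pow l⁻¹, mul_inv,
    inv_pow]
  ring

theorem Ashift_eq_upShift : Ashift = upShift ℝ 4 := rfl

theorem Crow_transpose_mul_self : Crowᵀ * Crow = single 0 0 1 := by
  rw [show Crow = single 0 0 1 by ext i j; fin_cases i; fin_cases j <;> rfl]
  simp

/-- for every `l > 0`, `P_l` is symmetric positive definite and
satisfies the Lyapunov identity `P_l A + Aᵀ P_l − Cᵀ C = −l P_l`. -/
theorem Pl_posdef_and_lyapunov (l : ℝ) (hl : 0 < l) :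
    (Pl l).IsSymm ∧ (Pl l).PosDef ∧
      Pl l * Ashift + Ashiftᵀ * Pl l - Crowᵀ * Crow = (-l) • Pl l := by
  rw [Pl_eq_highGainMatrix, Ashift_eq_upShift, Crow_transpose_mul_self]
  exact ⟨highGainMatrix_isSymm 4 l, highGainMatrix_posDef 4 hl, highGainMatrix_lyapunov hl.ne' 3⟩
end
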